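/- Under the same assumptions as the previous statement (H realizes every label at x and R is regular for abstention at x), the calibration gap ΔC(h,r,x) = C(h,r,x) − inf_{h'∈H, r'∈R} C(h',r',x) equals max{max_y p(y), 1 − c} − p(ĥ(x)) when r(x) > 0, and equals max{max_y p(y) − 1 + c, 0} when r(x) ≤ 0. -/
import Mathlib

/-- Conditional abstention risk at a point: `∑_y p(y)·1[ŷ ≠ y]·1[r > 0] + c·1[r ≤ 0]`. -/
noncomputable def condAbstRisk {n : ℕ} (p : Fin n → ℝ) (c : ℝ) (yhat : Fin n) (r : ℝ) : ℝ :=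
  ∑ y, p y * (if yhat ≠ y then (1 : ℝ) else 0) * (if 0 < r then (1 : ℝ) else 0)
    + c * (if r ≤ 0 then (1 : ℝ) else 0)

/-- Maximum of a real-valued function over `Fin n`, `n > 0`. -/
noncomputable def fmax {n : ℕ} (hn : 0 < n) (f : Fin n → ℝ) : ℝ :=
  Finset.univ.sup' (Finset.univ_nonempty_iff.mpr ⟨⟨0, hn⟩⟩) f

lemma risk_pos {n : ℕ} (p : Fin n → ℝ) (c : ℝ) (yhat : Fin n) (r : ℝ)
    (hpsum : ∑ y, p y = 1) (hr : 0 < r) :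
    condAbstRisk p c yhat r = 1 - p yhat := by
  unfold condAbstRisk
  rw [if_pos hr, if_neg (not_le.mpr hr)]
  have : ∀ y : Fin n, p y * (if yhat ≠ y then (1:ℝ) else 0) * 1
      = p y - (if y = yhat then p y else 0) := by
    intro y
    by_cases hy : yhat = y <;> simp [hy, eq_comm]
  rw [Finset.sum_congr rfl (fun y _ => this y), Finset.sum_sub_distrib, hpsum]
  simp

lemma risk_nonpos {n : ℕ} (p : Fin n → ℝ) (c : ℝ) (yhat : Fin n) (r : ℝ)
    (hr : r ≤ 0) :
    condAbstRisk p c yhat r = c := by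
  unfold condAbstRisk
  rw [if_pos hr, if_neg (not_lt.mpr hr)]
  simp

theorem stmt_2 {n : ℕ} (hn : 2 ≤ n) (c : ℝ) (hc : c ∈ Set.Ioo (0 : ℝ) 1)
    (p : Fin n → ℝ) (hp0 : ∀ y, 0 ≤ p y) (hpsum : ∑ y, p y = 1)
    (H : Set (Fin n → ℝ)) (pred : (Fin n → ℝ) → Fin n)
    (hpred : ∀ h : Fin n → ℝ, ∀ y, h y ≤ h (pred h))
    (hH : ∀ y : Fin n, ∃ h ∈ H, pred h = y)
    (R : Set ℝ) (hRpos : ∃ f ∈ R, (0 : ℝ) < f) (hRnonpos : ∃ g ∈ R, g ≤ (0 : ℝ))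
    (h : Fin n → ℝ) (hh : h ∈ H) (r : ℝ) (hr : r ∈ R) :
    (0 < r →
      condAbstRisk p c (pred h) r
          - sInf {v : ℝ | ∃ h' ∈ H, ∃ r' ∈ R, v = condAbstRisk p c (pred h') r'}
        = max (fmax (by omega) p) (1 - c) - p (pred h)) ∧
    (r ≤ 0 →
      condAbstRisk p c (pred h) r
          - sInf {v : ℝ | ∃ h' ∈ H, ∃ r' ∈ R, v = condAbstRisk p c (pred h') r'}
        = max (fmax (by omega) p - 1 + c) 0) := by
  have h0 : 0 < n := by omega
  have hne : (Finset.univ : Finset (Fin n)).Nonempty := ⟨⟨0, h0⟩, Finset.mem_univ _⟩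
  -- the set of values
  have hS : {v : ℝ | ∃ h' ∈ H, ∃ r' ∈ R, v = condAbstRisk p c (pred h') r'}
      = insert c ((fun y : Fin n => 1 - p y) '' Set.univ) := by
    ext v
    constructor
    · rintro ⟨h', hh', r', hr', rfl⟩
      rcases le_or_gt r' 0 with h1 | h1
      · left; exact risk_nonpos p c (pred h') r' h1
      · right
        exact ⟨pred h', Set.mem_univ _, (risk_pos p c (pred h') r' hpsum h1).symm⟩
    · rintro (h1 | ⟨y, -, rfl⟩)
      · obtain ⟨g, hg, hg0⟩ := hRnonpos
        obtain ⟨h', hh', -⟩ := hH ⟨0, h0⟩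
        exact ⟨h', hh', g, hg, by rw [risk_nonpos p c (pred h') g hg0, h1]⟩
      · obtain ⟨f, hf, hf0⟩ := hRpos
        obtain ⟨h', hh', hpy⟩ := hH y
        exact ⟨h', hh', f, hf, by rw [risk_pos p c (pred h') f hpsum hf0, hpy]⟩
  -- compute sInf
  obtain ⟨y0, -, hy0⟩ := Finset.exists_mem_eq_sup' hne p
  have hfmax : fmax h0 p = p y0 := hy0
  have hle : ∀ y, p y ≤ p y0 := by
    intro y; rw [← hfmax]; exact Finset.le_sup' p (Finset.mem_univ y)
  have himg : ((fun y : Fin n => 1 - p y) '' Set.univ) =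
      ((fun y : Fin n => 1 - p y) '' (Finset.univ : Finset (Fin n))) := by
    rw [Finset.coe_univ]
  have hinf_img : sInf ((fun y : Fin n => 1 - p y) '' Set.univ) = 1 - p y0 := by
    rw [himg, ← Finset.inf'_eq_csInf_image _ hne]
    apply le_antisymm
    · exact Finset.inf'_le _ (Finset.mem_univ y0)
    · apply Finset.le_inf'
      intro y _
      linarith [hle y]
  have hSinf : sInf {v : ℝ | ∃ h' ∈ H, ∃ r' ∈ R, v = condAbstRisk p c (pred h') r'}
      = min c (1 - p y0) := by
    rw [hS, csInf_insert ((Set.finite_univ.image _).bddBelow)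
      (Set.Nonempty.image _ ⟨⟨0, h0⟩, Set.mem_univ _⟩), hinf_img]
  constructor
  · intro hrpos
    rw [risk_pos p c (pred h) r hpsum hrpos, hSinf]
    have hfm : fmax (by omega : 0 < n) p = p y0 := hy0
    rw [hfm]
    rcases le_total c (1 - p y0) with h1 | h1
    · rw [min_eq_left h1, max_eq_right (by linarith)]
      ring
    · rw [min_eq_right h1, max_eq_left (by linarith)]
      ring
  · intro hrnp
    rw [risk_nonpos p c (pred h) r hrnp, hSinf]
    have hfm : fmax (by omega : 0 < n) p = p y0 := hy0
    rw [hfm]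
    rcases le_total c (1 - p y0) with h1 | h1
    · rw [min_eq_left h1, max_eq_right (by linarith)]
      ring
    · rw [min_eq_right h1, max_eq_left (by linarith)]
      ring
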